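/- arXiv:1808.01701 — 2 statements merged into one kernel-verified Lean document; each statement's English description precedes it below -/
import Mathlib

section
/- Let 𝒲 and 𝒵 be finite-dimensional complex Hilbert spaces, let {Δ_1,…,Δ_n} be an orthogonal set of nonzero projection operators on 𝒲, let {Λ_1,…,Λ_n} be an orthogonal set of nonzero projection operators on 𝒵, and let Π = Σ_{k=1}^n Δ_k⊗Λ_k. Let A be a unitary operator on 𝒲⊗𝒵 such that AΠ = ΠA and such that ⟨H, A⟩ = 0 for every Hermitian operator H on 𝒲⊗𝒵 with im(H) ⊆ im(Π) and Tr_𝒵(H) = 0. Then there exists a unitary operator W on 𝒲 such that ΠAΠ = Π(W⊗1_𝒵)Π. -/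
/-!
With `Π = Σ_k Δ_k ⊗ Λ_k`, the choice `B = Σ_k tr(Λ_k)⁻¹ Δ_k Tr_𝒵((1 ⊗ Λ_k) A) Δ_k` makes
`Y = ΠAΠ - Π(B ⊗ 1)Π` have vanishing partial trace. As `Y` lives on `im Π`, the hypothesis on
`A`, applied to the Hermitian operators `Y + Y*` and `i(Y - Y*)`, gives `⟨Y, A⟩ = 0`, while
`⟨Y, Π(B ⊗ 1)Π⟩ = ⟨Tr_𝒵 Y, B⟩ = 0`; hence `⟨Y, Y⟩ = 0` and `ΠAΠ = Σ_k (Δ_k B Δ_k) ⊗ Λ_k`.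
Since `A` is unitary and commutes with `Π`, `(ΠAΠ)(ΠAΠ)* = Π`, so each block `V_k = Δ_k B Δ_k`
satisfies `V_k V_k* = Δ_k`, and `W = 1 - Σ_k Δ_k + Σ_k V_k` is unitary with `Δ_k W Δ_k = V_k`.
-/

open Matrix
open scoped Kronecker ComplexOrder

/-- The partial trace over the factor `𝒵` of an operator on `𝒲 ⊗ 𝒵`. -/
noncomputable def ptraceZ2 {ιW ιZ : Type*} [Fintype ιZ]
    (M : Matrix (ιW × ιZ) (ιW × ιZ) ℂ) : Matrix ιW ιW ℂ :=
  Matrix.of fun w w' => ∑ z, M (w, z) (w', z)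

theorem sum_mul_sum_eq_sum_of_ne {R ι : Type*} [NonUnitalNonAssocSemiring R] [Fintype ι]
    {f g : ι → R} (h : ∀ j k, j ≠ k → f j * g k = 0) :
    (∑ j, f j) * (∑ k, g k) = ∑ k, f k * g k := by
  rw [Finset.sum_mul_sum]
  exact Finset.sum_congr rfl fun j _ =>
    Finset.sum_eq_single j (fun k _ hk => h j k (Ne.symm hk)) (by simp)

section OrthogonalIdempotents

variable {R ι : Type*} [Ring R]

theorem IsIdempotentElem.mul_corner {p : R} (hp : IsIdempotentElem p) (y : R) :
    p * (p * y * p) = p * y * p := by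
  rw [← mul_assoc, ← mul_assoc, hp.eq]

theorem IsIdempotentElem.corner_mul {p : R} (hp : IsIdempotentElem p) (y : R) :
    p * y * p * p = p * y * p := by
  rw [mul_assoc _ p, hp.eq]

variable {e : ι → R}

theorem OrthogonalIdempotents.mul_corner_of_ne (he : OrthogonalIdempotents e) {j k : ι}
    (h : j ≠ k) (y : R) : e j * (e k * y * e k) = 0 := by
  rw [← mul_assoc, ← mul_assoc, he.ortho h, zero_mul, zero_mul]

theorem OrthogonalIdempotents.corner_mul_of_ne (he : OrthogonalIdempotents e) {j k : ι}
    (h : j ≠ k) (y : R) : e j * y * e j * e k = 0 := by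
  rw [mul_assoc _ (e j), he.ortho h, mul_zero]

theorem OrthogonalIdempotents.mul_sum_corner_mul [Fintype ι] (he : OrthogonalIdempotents e)
    (x : ι → R) (k : ι) :
    e k * (∑ j, e j * x j * e j) * e k = e k * x k * e k := by
  rw [Finset.mul_sum, Finset.sum_eq_single k (fun j _ hj => he.mul_corner_of_ne (Ne.symm hj) _)
    (by simp), (he.idem k).mul_corner, (he.idem k).corner_mul]

theorem OrthogonalIdempotents.exists_mul_star_eq_one [Fintype ι] [StarRing R]
    (he : OrthogonalIdempotents e) (he_star : ∀ k, star (e k) = e k) (x : ι → R)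
    (hx : ∀ k, e k * x k * e k * star (e k * x k * e k) = e k) :
    ∃ w : R, w * star w = 1 ∧ ∀ k, e k * w * e k = e k * x k * e k := by
  have hstar (k : ι) : star (e k * x k * e k) = e k * star (x k) * e k := by
    simp only [star_mul, he_star, mul_assoc]
  set D := ∑ k, e k
  set S := ∑ k, e k * x k * e k
  have hDD : D * D = D := he.isIdempotentElem_sum.eq
  have hD_star : star D = D := by simp only [D, star_sum, he_star]
  have hSD : S * D = S := by
    rw [sum_mul_sum_eq_sum_of_ne fun j k h => he.corner_mul_of_ne h _]
    exact Finset.sum_congr rfl fun k _ => (he.idem k).corner_mul _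
  have hDS : D * star S = star S := by
    simp only [S, star_sum, hstar]
    rw [sum_mul_sum_eq_sum_of_ne fun j k h => he.mul_corner_of_ne h _]
    exact Finset.sum_congr rfl fun k _ => (he.idem k).mul_corner _
  have hSS : S * star S = D := by
    simp only [S, star_sum]
    rw [sum_mul_sum_eq_sum_of_ne fun j k h => by
      rw [hstar, ← mul_assoc, ← mul_assoc, he.corner_mul_of_ne h, zero_mul, zero_mul]]
    exact Finset.sum_congr rfl fun k _ => hx k
  refine ⟨1 - D + S, ?_, fun k => ?_⟩
  · calc (1 - D + S) * star (1 - D + S) = (1 - D + S) * (1 - D + star S) := by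
          rw [star_add, star_sub, star_one, hD_star]
      _ = 1 - D + (D * D - D) + (star S - D * star S) + (S - S * D) + S * star S := by
          noncomm_ring
      _ = 1 := by rw [hDD, hDS, hSD, hSS]; abel
  · have hD : e k * D * e k = e k := by
      rw [he.mul_sum_of_mem (Finset.mem_univ k), (he.idem k).eq]
    simp only [mul_add, mul_sub, add_mul, sub_mul, mul_one, hD, (he.idem k).eq, sub_self,
      zero_add]
    exact he.mul_sum_corner_mul x k

end OrthogonalIdempotents

section SumKronecker

variable {R ι m n : Type*} [CommRing R] [Fintype ι]

def sumKronecker (F : ι → Matrix m m R) (Λ : ι → Matrix n n R) : Matrix (m × n) (m × n) R :=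
  ∑ k, F k ⊗ₖ Λ k

variable {Λ : ι → Matrix n n R}

theorem sumKronecker_mul_sumKronecker [Fintype m] [Fintype n] [DecidableEq n]
    (hΛ : OrthogonalIdempotents Λ) (F G : ι → Matrix m m R) :
    sumKronecker F Λ * sumKronecker G Λ = sumKronecker (fun k => F k * G k) Λ := by
  rw [sumKronecker, sumKronecker, sum_mul_sum_eq_sum_of_ne fun j k h => by
    rw [← mul_kronecker_mul, hΛ.ortho h, kronecker_zero]]
  exact Finset.sum_congr rfl fun k _ => by rw [← mul_kronecker_mul, (hΛ.idem k).eq]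

theorem sumKronecker_mul_kronecker_one_mul [Fintype m] [Fintype n] [DecidableEq n]
    (hΛ : OrthogonalIdempotents Λ) (F : ι → Matrix m m R) (M : Matrix m m R) :
    sumKronecker F Λ * (M ⊗ₖ (1 : Matrix n n R)) * sumKronecker F Λ =
      sumKronecker (fun k => F k * M * F k) Λ := by
  have hM : M ⊗ₖ (1 : Matrix n n R) * sumKronecker F Λ = sumKronecker (fun k => M * F k) Λ := by
    simp only [sumKronecker, Finset.mul_sum, ← mul_kronecker_mul, one_mul]
  simp only [mul_assoc, hM, sumKronecker_mul_sumKronecker hΛ]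

theorem conjTranspose_sumKronecker [StarRing R] (hΛ : ∀ k, (Λ k).IsHermitian)
    (F : ι → Matrix m m R) :
    (sumKronecker F Λ)ᴴ = sumKronecker (fun k => (F k)ᴴ) Λ := by
  simp only [sumKronecker, conjTranspose_sum, conjTranspose_kronecker, (hΛ _).eq]

theorem isIdempotentElem_sumKronecker [Fintype m] [Fintype n] [DecidableEq n]
    {F : ι → Matrix m m R} (hF : ∀ k, IsIdempotentElem (F k)) (hΛ : OrthogonalIdempotents Λ) :
    IsIdempotentElem (sumKronecker F Λ) := by
  rw [IsIdempotentElem, sumKronecker_mul_sumKronecker hΛ]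
  simp only [(hF _).eq]

theorem isHermitian_sumKronecker [StarRing R] {F : ι → Matrix m m R}
    (hF : ∀ k, (F k).IsHermitian) (hΛ : ∀ k, (Λ k).IsHermitian) :
    (sumKronecker F Λ).IsHermitian := by
  rw [IsHermitian, conjTranspose_sumKronecker hΛ]
  simp only [(hF _).eq]

theorem kronecker_left_injective [IsDomain R] {N : Matrix n n R} (hN : N ≠ 0) :
    Function.Injective fun M : Matrix m m R => M ⊗ₖ N := by
  obtain ⟨a, b, hab⟩ : ∃ a b, N a b ≠ 0 := by
    by_contra! h
    exact hN (Matrix.ext h)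
  intro M M' h
  ext i j
  have := congrFun (congrFun h (i, a)) (j, b)
  simp only [kroneckerMap_apply] at this
  exact mul_right_cancel₀ hab this

theorem sumKronecker_injective [Fintype m] [Fintype n] [DecidableEq m] [DecidableEq n]
    [IsDomain R] (hΛ : OrthogonalIdempotents Λ) (hΛne : ∀ k, Λ k ≠ 0) :
    Function.Injective fun F : ι → Matrix m m R => sumKronecker F Λ := by
  have hproj (F : ι → Matrix m m R) (k : ι) :
      sumKronecker F Λ * ((1 : Matrix m m R) ⊗ₖ Λ k) = F k ⊗ₖ Λ k := by
    rw [sumKronecker, Finset.sum_mul, Finset.sum_eq_single k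
      (fun j _ hj => by rw [← mul_kronecker_mul, hΛ.ortho hj, kronecker_zero]) (by simp),
      ← mul_kronecker_mul, mul_one, (hΛ.idem k).eq]
  intro F G h
  funext k
  apply kronecker_left_injective (hΛne k)
  simpa only [hproj] using congrArg (· * ((1 : Matrix m m R) ⊗ₖ Λ k)) h

end SumKronecker

section PartialTrace

variable {ιW ιZ : Type*} [Fintype ιZ]

theorem ptraceZ2_zero : ptraceZ2 (0 : Matrix (ιW × ιZ) (ιW × ιZ) ℂ) = 0 := by
  ext; simp [ptraceZ2]

theorem ptraceZ2_add (M N : Matrix (ιW × ιZ) (ιW × ιZ) ℂ) :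
    ptraceZ2 (M + N) = ptraceZ2 M + ptraceZ2 N := by
  ext; simp [ptraceZ2, Finset.sum_add_distrib]

theorem ptraceZ2_sub (M N : Matrix (ιW × ιZ) (ιW × ιZ) ℂ) :
    ptraceZ2 (M - N) = ptraceZ2 M - ptraceZ2 N := by
  ext; simp [ptraceZ2, Finset.sum_sub_distrib]

theorem ptraceZ2_smul (c : ℂ) (M : Matrix (ιW × ιZ) (ιW × ιZ) ℂ) :
    ptraceZ2 (c • M) = c • ptraceZ2 M := by
  ext; simp [ptraceZ2, Finset.mul_sum]

theorem ptraceZ2_conjTranspose (M : Matrix (ιW × ιZ) (ιW × ιZ) ℂ) :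
    ptraceZ2 Mᴴ = (ptraceZ2 M)ᴴ := by
  ext; simp [ptraceZ2, conjTranspose_apply]

theorem ptraceZ2_sum {ι : Type*} (s : Finset ι) (f : ι → Matrix (ιW × ιZ) (ιW × ιZ) ℂ) :
    ptraceZ2 (∑ k ∈ s, f k) = ∑ k ∈ s, ptraceZ2 (f k) := by
  ext
  simp only [ptraceZ2, of_apply, Matrix.sum_apply]
  exact Finset.sum_comm

theorem ptraceZ2_kronecker (P : Matrix ιW ιW ℂ) (Q : Matrix ιZ ιZ ℂ) :
    ptraceZ2 (P ⊗ₖ Q) = Q.trace • P := by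
  ext
  simp [ptraceZ2, trace, Finset.mul_sum, mul_comm]

theorem trace_ptraceZ2 [Fintype ιW] (M : Matrix (ιW × ιZ) (ιW × ιZ) ℂ) :
    (ptraceZ2 M).trace = M.trace := by
  simp [ptraceZ2, trace, Fintype.sum_prod_type]

variable [Fintype ιW]

theorem ptraceZ2_kronecker_one_mul [DecidableEq ιZ] (P : Matrix ιW ιW ℂ)
    (M : Matrix (ιW × ιZ) (ιW × ιZ) ℂ) :
    ptraceZ2 ((P ⊗ₖ (1 : Matrix ιZ ιZ ℂ)) * M) = P * ptraceZ2 M := by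
  ext
  simp only [ptraceZ2, of_apply, mul_apply, kroneckerMap_apply, one_apply,
    Fintype.sum_prod_type, mul_ite, mul_zero, ite_mul, zero_mul, mul_one,
    Finset.sum_ite_eq, Finset.mem_univ, if_true, Finset.mul_sum]
  exact Finset.sum_comm

theorem ptraceZ2_mul_kronecker_one [DecidableEq ιZ] (M : Matrix (ιW × ιZ) (ιW × ιZ) ℂ)
    (P : Matrix ιW ιW ℂ) :
    ptraceZ2 (M * (P ⊗ₖ (1 : Matrix ιZ ιZ ℂ))) = ptraceZ2 M * P := by
  ext
  simp only [ptraceZ2, of_apply, mul_apply, kroneckerMap_apply, one_apply,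
    Fintype.sum_prod_type, mul_ite, mul_zero, mul_one, Finset.sum_ite_eq', Finset.mem_univ,
    if_true, Finset.sum_mul]
  exact Finset.sum_comm

theorem ptraceZ2_mul_one_kronecker [DecidableEq ιW] (M : Matrix (ιW × ιZ) (ιW × ιZ) ℂ)
    (Q : Matrix ιZ ιZ ℂ) :
    ptraceZ2 (M * ((1 : Matrix ιW ιW ℂ) ⊗ₖ Q)) = ptraceZ2 (((1 : Matrix ιW ιW ℂ) ⊗ₖ Q) * M) := by
  ext w w'
  simp only [ptraceZ2, of_apply, mul_apply, kroneckerMap_apply, one_apply,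
    Fintype.sum_prod_type, mul_ite, mul_zero, ite_mul, zero_mul, one_mul,
    Finset.sum_ite_irrel, Finset.sum_const_zero, Finset.sum_ite_eq, Finset.sum_ite_eq',
    Finset.mem_univ, if_true]
  rw [Finset.sum_comm]
  simp only [mul_comm]

theorem ptraceZ2_kronecker_mul_mul_kronecker [DecidableEq ιW] [DecidableEq ιZ]
    (P R : Matrix ιW ιW ℂ) (Q S : Matrix ιZ ιZ ℂ) (M : Matrix (ιW × ιZ) (ιW × ιZ) ℂ) :
    ptraceZ2 ((P ⊗ₖ Q) * M * (R ⊗ₖ S)) =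
      P * ptraceZ2 (((1 : Matrix ιW ιW ℂ) ⊗ₖ (S * Q)) * M) * R := by
  have hPQ : P ⊗ₖ Q = (P ⊗ₖ (1 : Matrix ιZ ιZ ℂ)) * ((1 : Matrix ιW ιW ℂ) ⊗ₖ Q) := by
    rw [← mul_kronecker_mul, mul_one, one_mul]
  have hRS : R ⊗ₖ S = ((1 : Matrix ιW ιW ℂ) ⊗ₖ S) * (R ⊗ₖ (1 : Matrix ιZ ιZ ℂ)) := by
    rw [← mul_kronecker_mul, mul_one, one_mul]
  rw [hPQ, hRS, ← mul_assoc, mul_assoc _ _ M, mul_assoc _ _ (_ ⊗ₖ S), ptraceZ2_mul_kronecker_one,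
    ptraceZ2_kronecker_one_mul, ptraceZ2_mul_one_kronecker, ← mul_assoc, ← mul_kronecker_mul,
    one_mul]

theorem trace_conjTranspose_mul_kronecker_one [DecidableEq ιZ] (Y : Matrix (ιW × ιZ) (ιW × ιZ) ℂ)
    (B : Matrix ιW ιW ℂ) :
    (Yᴴ * (B ⊗ₖ (1 : Matrix ιZ ιZ ℂ))).trace = ((ptraceZ2 Y)ᴴ * B).trace := by
  rw [← trace_ptraceZ2, ptraceZ2_mul_kronecker_one, ptraceZ2_conjTranspose]

end PartialTrace

section Compression

variable {ι ιW ιZ : Type*} [Fintype ι] [Fintype ιW] [Fintype ιZ] [DecidableEq ιW] [DecidableEq ιZ]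

theorem ptraceZ2_sumKronecker_mul_mul_sumKronecker {Λ : ι → Matrix ιZ ιZ ℂ}
    (hΛ : OrthogonalIdempotents Λ) (F : ι → Matrix ιW ιW ℂ) (M : Matrix (ιW × ιZ) (ιW × ιZ) ℂ) :
    ptraceZ2 (sumKronecker F Λ * M * sumKronecker F Λ) =
      ∑ k, F k * ptraceZ2 (((1 : Matrix ιW ιW ℂ) ⊗ₖ Λ k) * M) * F k := by
  classical
  simp only [sumKronecker, Finset.sum_mul, Finset.mul_sum, ptraceZ2_sum,
    ptraceZ2_kronecker_mul_mul_kronecker, hΛ.mul_eq]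
  refine Finset.sum_congr rfl fun j _ => ?_
  rw [Finset.sum_eq_single j (fun k _ hk => by
    rw [if_neg (Ne.symm hk), kronecker_zero, zero_mul, ptraceZ2_zero, mul_zero, zero_mul])
    (by simp), if_pos rfl]

theorem exists_ptraceZ2_sumKronecker_mul_kronecker_one_mul_eq {Δ : ι → Matrix ιW ιW ℂ}
    {Λ : ι → Matrix ιZ ιZ ℂ} (hΔ : OrthogonalIdempotents Δ) (hΛ : OrthogonalIdempotents Λ)
    (hΛtr : ∀ k, (Λ k).trace ≠ 0) (M : Matrix (ιW × ιZ) (ιW × ιZ) ℂ) :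
    ∃ B : Matrix ιW ιW ℂ,
      ptraceZ2 (sumKronecker Δ Λ * (B ⊗ₖ (1 : Matrix ιZ ιZ ℂ)) * sumKronecker Δ Λ) =
        ptraceZ2 (sumKronecker Δ Λ * M * sumKronecker Δ Λ) := by
  set C := fun k => ptraceZ2 (((1 : Matrix ιW ιW ℂ) ⊗ₖ Λ k) * M)
  refine ⟨∑ k, Δ k * ((Λ k).trace⁻¹ • C k) * Δ k, ?_⟩
  rw [ptraceZ2_sumKronecker_mul_mul_sumKronecker hΛ, ptraceZ2_sumKronecker_mul_mul_sumKronecker hΛ]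
  refine Finset.sum_congr rfl fun k _ => ?_
  rw [← mul_kronecker_mul, one_mul, mul_one, ptraceZ2_kronecker, mul_smul_comm, smul_mul_assoc,
    hΔ.mul_sum_corner_mul, mul_smul_comm, smul_mul_assoc, smul_smul, mul_inv_cancel₀ (hΛtr k),
    one_smul]

end Compression

section SquareMatrix

variable {m : Type*} [Fintype m]

/-- `2 Yᴴ = (Y + Yᴴ)ᴴ + i (i (Y - Yᴴ))ᴴ`. -/
theorem trace_conjTranspose_mul_eq_zero_of_isHermitian (p : Matrix m m ℂ → Prop)
    {A : Matrix m m ℂ} (hA : ∀ H : Matrix m m ℂ, H.IsHermitian → p H → (Hᴴ * A).trace = 0)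
    {Y : Matrix m m ℂ} (hre : p (Y + Yᴴ)) (him : p (Complex.I • (Y - Yᴴ))) :
    (Yᴴ * A).trace = 0 := by
  have hre_herm : (Y + Yᴴ).IsHermitian := isHermitian_add_transpose_self Y
  have him_herm : (Complex.I • (Y - Yᴴ)).IsHermitian := by
    rw [IsHermitian, conjTranspose_smul, conjTranspose_sub, conjTranspose_conjTranspose,
      Complex.star_def, Complex.conj_I, neg_smul, ← smul_neg, neg_sub]
  have h₁ := hA _ hre_herm hre
  have h₂ := hA _ him_herm him
  rw [hre_herm.eq, add_mul, trace_add] at h₁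
  rw [him_herm.eq, smul_mul_assoc, trace_smul, sub_mul, trace_sub,
    smul_eq_zero_iff_right Complex.I_ne_zero] at h₂
  linear_combination (h₁ - h₂) / 2

theorem range_mulVecLin_le_of_mul_eq {P M : Matrix m m ℂ} (h : P * M = M) :
    LinearMap.range M.mulVecLin ≤ LinearMap.range P.mulVecLin := by
  rw [← h, mulVecLin_mul]
  exact LinearMap.range_comp_le_range _ _

theorem Matrix.IsHermitian.trace_conjTranspose_mul_mul_mul {P : Matrix m m ℂ} (hP : P.IsHermitian)
    (Y M : Matrix m m ℂ) : (Yᴴ * (P * M * P)).trace = ((P * Y * P)ᴴ * M).trace := by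
  rw [conjTranspose_mul, conjTranspose_mul, hP.eq, ← mul_assoc, trace_mul_cycle]
  simp only [mul_assoc]

theorem Matrix.IsHermitian.trace_ne_zero_of_isIdempotentElem
    {Q : Matrix m m ℂ} (hQ : Q.IsHermitian) (hQQ : IsIdempotentElem Q) (hQ0 : Q ≠ 0) :
    Q.trace ≠ 0 := by
  rwa [← hQQ.eq, ← congrArg (· * Q) hQ.eq, Ne, trace_conjTranspose_mul_self_eq_zero_iff]

theorem Matrix.IsHermitian.mul_mul_conjTranspose_mul_mul_eq_self [DecidableEq m]
    {P A : Matrix m m ℂ} (hP : P.IsHermitian) (hPP : P * P = P)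
    (hA : A * Aᴴ = 1) (hAP : A * P = P * A) : P * A * P * (P * A * P)ᴴ = P := by
  have hPAP : P * A * P = P * A := by rw [mul_assoc, hAP, ← mul_assoc, hPP]
  rw [hPAP, conjTranspose_mul, hP.eq, mul_assoc, ← mul_assoc A, hA, one_mul, hPP]

end SquareMatrix

section Main

variable {ιW ιZ : Type*} [Fintype ιW] [Fintype ιZ]

theorem trace_conjTranspose_mul_eq_zero_of_ptraceZ2_eq_zero
    {P A Y : Matrix (ιW × ιZ) (ιW × ιZ) ℂ} (hP : P.IsHermitian)
    (hA : ∀ H : Matrix (ιW × ιZ) (ιW × ιZ) ℂ, H.IsHermitian →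
      LinearMap.range H.mulVecLin ≤ LinearMap.range P.mulVecLin →
      ptraceZ2 H = 0 → (Hᴴ * A).trace = 0)
    (hPY : P * Y = Y) (hYP : Y * P = Y) (hY : ptraceZ2 Y = 0) :
    (Yᴴ * A).trace = 0 := by
  have hPYH : P * Yᴴ = Yᴴ := by rw [← hP.eq, ← conjTranspose_mul, hYP]
  refine trace_conjTranspose_mul_eq_zero_of_isHermitian (fun H => P * H = H ∧ ptraceZ2 H = 0)
    (fun H hH h => hA H hH (range_mulVecLin_le_of_mul_eq h.1) h.2) ⟨?_, ?_⟩ ⟨?_, ?_⟩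
  · rw [mul_add, hPY, hPYH]
  · rw [ptraceZ2_add, ptraceZ2_conjTranspose, hY, conjTranspose_zero, add_zero]
  · rw [mul_smul_comm, mul_sub, hPY, hPYH]
  · rw [ptraceZ2_smul, ptraceZ2_sub, ptraceZ2_conjTranspose, hY, conjTranspose_zero, sub_zero,
      smul_zero]

theorem exists_sumKronecker_mul_mul_eq_kronecker_one [DecidableEq ιW] [DecidableEq ιZ]
    {ι : Type*} [Fintype ι]
    {Δ : ι → Matrix ιW ιW ℂ} {Λ : ι → Matrix ιZ ιZ ℂ}
    (hΔ : OrthogonalIdempotents Δ) (hΔh : ∀ k, (Δ k).IsHermitian)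
    (hΛ : OrthogonalIdempotents Λ) (hΛh : ∀ k, (Λ k).IsHermitian) (hΛne : ∀ k, Λ k ≠ 0)
    {A : Matrix (ιW × ιZ) (ιW × ιZ) ℂ}
    (hA : ∀ H : Matrix (ιW × ιZ) (ιW × ιZ) ℂ, H.IsHermitian →
      LinearMap.range H.mulVecLin ≤ LinearMap.range (sumKronecker Δ Λ).mulVecLin →
      ptraceZ2 H = 0 → (Hᴴ * A).trace = 0) :
    ∃ B : Matrix ιW ιW ℂ, sumKronecker Δ Λ * A * sumKronecker Δ Λ =
      sumKronecker Δ Λ * (B ⊗ₖ (1 : Matrix ιZ ιZ ℂ)) * sumKronecker Δ Λ := by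
  set P := sumKronecker Δ Λ
  have hP : P.IsHermitian := isHermitian_sumKronecker hΔh hΛh
  have hPP : P * P = P := (isIdempotentElem_sumKronecker hΔ.idem hΛ).eq
  obtain ⟨B, hB⟩ := exists_ptraceZ2_sumKronecker_mul_kronecker_one_mul_eq hΔ hΛ
    (fun k => (hΛh k).trace_ne_zero_of_isIdempotentElem (hΛ.idem k) (hΛne k)) A
  set Y := P * A * P - P * (B ⊗ₖ (1 : Matrix ιZ ιZ ℂ)) * P
  have hPY : P * Y = Y := by simp only [Y, mul_sub, ← mul_assoc, hPP]
  have hYP : Y * P = Y := by simp only [Y, sub_mul, mul_assoc, hPP]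
  have hPYP : P * Y * P = Y := by rw [hPY, hYP]
  have hY : ptraceZ2 Y = 0 := by rw [ptraceZ2_sub, hB, sub_self]
  have hYA := trace_conjTranspose_mul_eq_zero_of_ptraceZ2_eq_zero hP hA hPY hYP hY
  refine ⟨B, sub_eq_zero.1 (trace_conjTranspose_mul_self_eq_zero_iff.1 ?_)⟩
  calc (Yᴴ * Y).trace
      = (Yᴴ * (P * A * P)).trace - (Yᴴ * (P * (B ⊗ₖ (1 : Matrix ιZ ιZ ℂ)) * P)).trace := by
        rw [← trace_sub, ← mul_sub]
    _ = 0 := by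
        rw [hP.trace_conjTranspose_mul_mul_mul, hP.trace_conjTranspose_mul_mul_mul, hPYP, hYA,
          trace_conjTranspose_mul_kronecker_one, hY, conjTranspose_zero, zero_mul, trace_zero,
          sub_zero]

end Main

theorem statement2_general {ιW ιZ : Type*} [Fintype ιW] [Fintype ιZ] [DecidableEq ιW] [DecidableEq ιZ]
    (n : ℕ) (Δ : Fin n → Matrix ιW ιW ℂ) (Λ : Fin n → Matrix ιZ ιZ ℂ)
    (hΔproj : ∀ k, (Δ k).IsHermitian ∧ Δ k * Δ k = Δ k)
    (hΔorth : ∀ j k, j ≠ k → Δ j * Δ k = 0)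
    (hΛproj : ∀ k, (Λ k).IsHermitian ∧ Λ k * Λ k = Λ k)
    (hΛne : ∀ k, Λ k ≠ 0)
    (hΛorth : ∀ j k, j ≠ k → Λ j * Λ k = 0)
    (A : Matrix (ιW × ιZ) (ιW × ιZ) ℂ)
    (hAunitary : A ∈ Matrix.unitaryGroup (ιW × ιZ) ℂ)
    (hAcomm : A * (∑ k, Δ k ⊗ₖ Λ k) = (∑ k, Δ k ⊗ₖ Λ k) * A)
    (hA : ∀ H : Matrix (ιW × ιZ) (ιW × ιZ) ℂ, H.IsHermitian →
      LinearMap.range H.mulVecLin ≤ LinearMap.range (∑ k, Δ k ⊗ₖ Λ k).mulVecLin →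
      ptraceZ2 H = 0 → (Hᴴ * A).trace = 0) :
    ∃ W ∈ Matrix.unitaryGroup ιW ℂ,
      (∑ k, Δ k ⊗ₖ Λ k) * A * (∑ k, Δ k ⊗ₖ Λ k) =
      (∑ k, Δ k ⊗ₖ Λ k) * (W ⊗ₖ (1 : Matrix ιZ ιZ ℂ)) * (∑ k, Δ k ⊗ₖ Λ k) := by
  have hΔ : OrthogonalIdempotents Δ := ⟨fun k => (hΔproj k).2, hΔorth⟩
  have hΛ : OrthogonalIdempotents Λ := ⟨fun k => (hΛproj k).2, hΛorth⟩
  have hΔh k : (Δ k).IsHermitian := (hΔproj k).1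
  have hΛh k : (Λ k).IsHermitian := (hΛproj k).1
  change ∃ W ∈ unitaryGroup ιW ℂ, sumKronecker Δ Λ * A * sumKronecker Δ Λ =
    sumKronecker Δ Λ * (W ⊗ₖ (1 : Matrix ιZ ιZ ℂ)) * sumKronecker Δ Λ
  obtain ⟨B, hB⟩ := exists_sumKronecker_mul_mul_eq_kronecker_one hΔ hΔh hΛ hΛh hΛne hA
  rw [sumKronecker_mul_kronecker_one_mul hΛ] at hB
  have hcoisometry k : Δ k * B * Δ k * star (Δ k * B * Δ k) = Δ k := by
    have h := (isHermitian_sumKronecker hΔh hΛh).mul_mul_conjTranspose_mul_mul_eq_self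
      (isIdempotentElem_sumKronecker hΔ.idem hΛ).eq (mem_unitaryGroup_iff.1 hAunitary) hAcomm
    rw [hB, conjTranspose_sumKronecker hΛh, sumKronecker_mul_sumKronecker hΛ] at h
    exact congrFun (sumKronecker_injective hΛ hΛne h) k
  obtain ⟨W, hW, hWΔ⟩ := hΔ.exists_mul_star_eq_one (fun k => (hΔh k).eq) (fun _ => B)
    hcoisometry
  refine ⟨W, mem_unitaryGroup_iff.2 hW, ?_⟩
  rw [hB, sumKronecker_mul_kronecker_one_mul hΛ]
  simp only [hWΔ]

/-- Given orthogonal families of nonzero (Hermitian, idempotent) projections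
`Δ_k` on `𝒲` and `Λ_k` on `𝒵`, set `Π = Σ_k Δ_k ⊗ Λ_k`.  If `A` is a unitary operator on
`𝒲 ⊗ 𝒵` commuting with `Π` such that `⟨H, A⟩ = 0` for every Hermitian `H` with
`im(H) ⊆ im(Π)` and `Tr_𝒵(H) = 0`, then `Π A Π = Π (W ⊗ 1) Π` for some unitary `W` on `𝒲`. -/
theorem statement2 {ιW ιZ : Type*} [Fintype ιW] [Fintype ιZ] [DecidableEq ιW] [DecidableEq ιZ]
    (n : ℕ) (Δ : Fin n → Matrix ιW ιW ℂ) (Λ : Fin n → Matrix ιZ ιZ ℂ)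
    (hΔproj : ∀ k, (Δ k).IsHermitian ∧ Δ k * Δ k = Δ k)
    (hΔne : ∀ k, Δ k ≠ 0)
    (hΔorth : ∀ j k, j ≠ k → Δ j * Δ k = 0)
    (hΛproj : ∀ k, (Λ k).IsHermitian ∧ Λ k * Λ k = Λ k)
    (hΛne : ∀ k, Λ k ≠ 0)
    (hΛorth : ∀ j k, j ≠ k → Λ j * Λ k = 0)
    (A : Matrix (ιW × ιZ) (ιW × ιZ) ℂ)
    (hAunitary : A ∈ Matrix.unitaryGroup (ιW × ιZ) ℂ)
    (hAcomm : A * (∑ k, Δ k ⊗ₖ Λ k) = (∑ k, Δ k ⊗ₖ Λ k) * A)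
    (hA : ∀ H : Matrix (ιW × ιZ) (ιW × ιZ) ℂ, H.IsHermitian →
      LinearMap.range H.mulVecLin ≤ LinearMap.range (∑ k, Δ k ⊗ₖ Λ k).mulVecLin →
      ptraceZ2 H = 0 → (Hᴴ * A).trace = 0) :
    ∃ W ∈ Matrix.unitaryGroup ιW ℂ,
      (∑ k, Δ k ⊗ₖ Λ k) * A * (∑ k, Δ k ⊗ₖ Λ k) =
      (∑ k, Δ k ⊗ₖ Λ k) * (W ⊗ₖ (1 : Matrix ιZ ιZ ℂ)) * (∑ k, Δ k ⊗ₖ Λ k) :=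
  statement2_general n Δ Λ hΔproj hΔorth hΛproj hΛne hΛorth A hAunitary hAcomm hA
end

section
/- Let 𝒳, 𝒴, 𝒵 be finite-dimensional complex Hilbert spaces and let U be a unitary operator on 𝒳⊗𝒴⊗𝒵 that is 𝒴→𝒳 causal. Then for every unitary operator X on 𝒳 there exists a unitary operator W on 𝒳⊗𝒴 such that U*(X⊗1_{𝒴⊗𝒵})U = W⊗1_𝒵. -/
open Matrix
open scoped Kronecker ComplexOrder

/-- The partial trace over the factor `𝒵` of an operator on `𝒳 ⊗ 𝒴 ⊗ 𝒵`,
represented as a matrix over the index set `(ιX × ιY) × ιZ`. -/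
noncomputable def ptraceZ3 {ιX ιY ιZ : Type*} [Fintype ιZ]
    (M : Matrix ((ιX × ιY) × ιZ) ((ιX × ιY) × ιZ) ℂ) :
    Matrix (ιX × ιY) (ιX × ιY) ℂ :=
  Matrix.of fun w w' => ∑ z, M (w, z) (w', z)

/-- The partial trace over the factor `𝒴 ⊗ 𝒵` of an operator on `𝒳 ⊗ 𝒴 ⊗ 𝒵`. -/
noncomputable def ptraceYZ3 {ιX ιY ιZ : Type*} [Fintype ιY] [Fintype ιZ]
    (M : Matrix ((ιX × ιY) × ιZ) ((ιX × ιY) × ιZ) ℂ) :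
    Matrix ιX ιX ℂ :=
  Matrix.of fun x x' => ∑ y, ∑ z, M ((x, y), z) ((x', y), z)

/-- `U` is `𝒴 → 𝒳` causal on the subspace `V ⊆ 𝒳 ⊗ 𝒴 ⊗ 𝒵`: for all density operators
`ρ, σ` supported on `V` with equal partial traces over `𝒵`, the states
`U ρ U*` and `U σ U*` have equal partial traces over `𝒴 ⊗ 𝒵`. -/
def IsCausalOn {ιX ιY ιZ : Type*} [Fintype ιX] [Fintype ιY] [Fintype ιZ]
    (U : Matrix ((ιX × ιY) × ιZ) ((ιX × ιY) × ιZ) ℂ)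
    (V : Submodule ℂ (((ιX × ιY) × ιZ) → ℂ)) : Prop :=
  ∀ ρ σ : Matrix ((ιX × ιY) × ιZ) ((ιX × ιY) × ιZ) ℂ,
    ρ.PosSemidef → ρ.trace = 1 → LinearMap.range ρ.mulVecLin ≤ V →
    σ.PosSemidef → σ.trace = 1 → LinearMap.range σ.mulVecLin ≤ V →
    ptraceZ3 ρ = ptraceZ3 σ →
    ptraceYZ3 (U * ρ * Uᴴ) = ptraceYZ3 (U * σ * Uᴴ)

/-!
Causality says that `ρ ↦ Tr_{𝒴𝒵}(U ρ U*)` takes equal values on density operators with equal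
`Tr_𝒵`. By homogeneity the same holds for positive semidefinite operators; writing a Hermitian
`H` as `(H + P) - P` with `P, H + P ≥ 0`, and an arbitrary `M` as `ℜ M + i ℑ M`, the map then
vanishes on the kernel of `Tr_𝒵`. Since `tr((X ⊗ 1) N) = tr(X Tr_{𝒴𝒵} N)`, the operator
`G = U*(X ⊗ 1)U` satisfies `tr(G M) = 0` whenever `Tr_𝒵 M = 0`; testing this on matrix units
forces `G = W ⊗ 1_𝒵`, and `W` is unitary because `G` is.
-/

open scoped ComplexStarModule

namespace Matrix

variable {n : Type*} [Fintype n]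

open scoped Norms.L2Operator MatrixOrder in
lemma IsHermitian.exists_posSemidef_add_posSemidef {H : Matrix n n ℂ} (hH : H.IsHermitian) :
    ∃ P : Matrix n n ℂ, P.PosSemidef ∧ (H + P).PosSemidef := by
  classical
  refine ⟨(‖H‖ : ℂ) • 1, PosSemidef.one.smul (by simp), ?_⟩
  rw [← nonneg_iff_posSemidef, ← neg_le_iff_add_nonneg]
  have := IsSelfAdjoint.neg_algebraMap_norm_le_self hH
  rwa [Algebra.algebraMap_eq_smul_one, ← Complex.coe_smul] at this

lemma ker_le_ker_of_posSemidef {m E : Type*} [Fintype m] [AddCommGroup E] [Module ℂ E]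
    (φ : Matrix n n ℂ →ₗ[ℂ] Matrix m m ℂ) (hφ : ∀ M, φ Mᴴ = (φ M)ᴴ)
    (ψ : Matrix n n ℂ →ₗ[ℂ] E)
    (h : ∀ ρ σ : Matrix n n ℂ, ρ.PosSemidef → σ.PosSemidef → φ ρ = φ σ → ψ ρ = ψ σ) :
    LinearMap.ker φ ≤ LinearMap.ker ψ := by
  have hermitian : ∀ H : Matrix n n ℂ, H.IsHermitian → φ H = 0 → ψ H = 0 := by
    intro H hH hφH
    obtain ⟨P, hP, hHP⟩ := hH.exists_posSemidef_add_posSemidef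
    have := h (H + P) P hHP hP (by rw [map_add, hφH, zero_add])
    rwa [map_add, add_eq_right] at this
  intro M hM
  rw [LinearMap.mem_ker] at hM ⊢
  have hre : φ (ℜ M : Matrix n n ℂ) = 0 := by
    simp [realPart_apply_coe, star_eq_conjTranspose, hφ, hM]
  have him : φ (ℑ M : Matrix n n ℂ) = 0 := by
    simp [imaginaryPart_apply_coe, star_eq_conjTranspose, hφ, hM]
  rw [← realPart_add_I_smul_imaginaryPart M, map_add, map_smul, hermitian _ (ℜ M).2 hre,
    hermitian _ (ℑ M).2 him, smul_zero, add_zero]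

lemma kronecker_one_injective {R l m n : Type*} [MulZeroOneClass R] [DecidableEq n]
    [Nonempty n] :
    Function.Injective fun A : Matrix l m R => A ⊗ₖ (1 : Matrix n n R) := by
  intro A B h
  obtain ⟨z⟩ := ‹Nonempty n›
  ext i j
  simpa using congrFun (congrFun h (i, z)) (j, z)

lemma mem_unitary_of_kronecker_one_mem_unitary {R m n : Type*} [CommSemiring R] [StarRing R]
    [Fintype m] [Fintype n] [DecidableEq m] [DecidableEq n] [Nonempty n] {W : Matrix m m R}
    (h : W ⊗ₖ (1 : Matrix n n R) ∈ unitary (Matrix (m × n) (m × n) R)) :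
    W ∈ unitary (Matrix m m R) := by
  simp only [Unitary.mem_iff, star_eq_conjTranspose, conjTranspose_kronecker,
    conjTranspose_one, ← mul_kronecker_mul, mul_one, ← one_kronecker_one (m := m) (n := n)] at h ⊢
  exact ⟨kronecker_one_injective h.1, kronecker_one_injective h.2⟩

end Matrix

section PartialTrace

variable {ιX ιY ιZ : Type*} [Fintype ιZ]

@[simps]
noncomputable def ptraceZ3LinearMap :
    Matrix ((ιX × ιY) × ιZ) ((ιX × ιY) × ιZ) ℂ →ₗ[ℂ] Matrix (ιX × ιY) (ιX × ιY) ℂ where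
  toFun := ptraceZ3
  map_add' M N := by ext; simp [ptraceZ3, Finset.sum_add_distrib]
  map_smul' c M := by ext; simp [ptraceZ3, Finset.mul_sum]

lemma ptraceZ3_conjTranspose (M : Matrix ((ιX × ιY) × ιZ) ((ιX × ιY) × ιZ) ℂ) :
    ptraceZ3 Mᴴ = (ptraceZ3 M)ᴴ := by
  ext
  simp [ptraceZ3, conjTranspose_apply]

lemma ptraceZ3_single_same [DecidableEq ιX] [DecidableEq ιY] [DecidableEq ιZ]
    (w w' : ιX × ιY) (z : ιZ) (c : ℂ) :
    ptraceZ3 (single (w, z) (w', z) c) = single w w' c := by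
  ext v v'
  simp [ptraceZ3, single_apply, ite_and, Finset.sum_ite_eq]

lemma ptraceZ3_single_of_ne [DecidableEq ιX] [DecidableEq ιY] [DecidableEq ιZ]
    (w w' : ιX × ιY) {z z' : ιZ} (hz : z ≠ z') (c : ℂ) :
    ptraceZ3 (single (w, z) (w', z') c) = 0 := by
  ext v v'
  simp [ptraceZ3, single_apply, ite_and, hz.symm]

variable [Fintype ιY]

@[simps]
noncomputable def ptraceYZ3LinearMap :
    Matrix ((ιX × ιY) × ιZ) ((ιX × ιY) × ιZ) ℂ →ₗ[ℂ] Matrix ιX ιX ℂ where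
  toFun := ptraceYZ3
  map_add' M N := by ext; simp [ptraceYZ3, Finset.sum_add_distrib]
  map_smul' c M := by ext; simp [ptraceYZ3, Finset.mul_sum]

variable [Fintype ιX]

lemma trace_ptraceZ3 (M : Matrix ((ιX × ιY) × ιZ) ((ιX × ιY) × ιZ) ℂ) :
    (ptraceZ3 M).trace = M.trace := by
  simp [trace, ptraceZ3, Fintype.sum_prod_type]

lemma trace_kronecker_one_kronecker_one_mul [DecidableEq ιY] [DecidableEq ιZ]
    (X : Matrix ιX ιX ℂ) (M : Matrix ((ιX × ιY) × ιZ) ((ιX × ιY) × ιZ) ℂ) :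
    ((X ⊗ₖ (1 : Matrix ιY ιY ℂ)) ⊗ₖ (1 : Matrix ιZ ιZ ℂ) * M).trace
      = (X * ptraceYZ3 M).trace := by
  simp only [trace, diag_apply, mul_apply, kroneckerMap_apply, one_apply, mul_ite, mul_one,
    mul_zero, ite_mul, zero_mul, Fintype.sum_prod_type, Finset.sum_ite_eq, Finset.mem_univ,
    if_true, ptraceYZ3, of_apply, Finset.mul_sum]
  refine Finset.sum_congr rfl fun x _ => ?_
  exact (Finset.sum_congr rfl fun y _ => Finset.sum_comm).trans Finset.sum_comm

end PartialTrace

section Causal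

variable {ιX ιY ιZ : Type*} [Fintype ιX] [Fintype ιY] [Fintype ιZ]
  {U : Matrix ((ιX × ιY) × ιZ) ((ιX × ιY) × ιZ) ℂ}

lemma IsCausalOn.ptraceYZ3_eq_of_posSemidef (hU : IsCausalOn U ⊤)
    {ρ σ : Matrix ((ιX × ιY) × ιZ) ((ιX × ιY) × ιZ) ℂ} (hρ : ρ.PosSemidef) (hσ : σ.PosSemidef)
    (h : ptraceZ3 ρ = ptraceZ3 σ) :
    ptraceYZ3 (U * ρ * Uᴴ) = ptraceYZ3 (U * σ * Uᴴ) := by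
  have htr : σ.trace = ρ.trace := by rw [← trace_ptraceZ3, ← h, trace_ptraceZ3]
  by_cases h0 : ρ.trace = 0
  · rw [hρ.trace_eq_zero_iff.mp h0, hσ.trace_eq_zero_iff.mp (htr.trans h0)]
  set c := ρ.trace⁻¹
  have hc : 0 ≤ c := inv_nonneg_of_nonneg hρ.trace_nonneg
  have hcρ : (c • ρ).trace = 1 := by rw [trace_smul, smul_eq_mul, inv_mul_cancel₀ h0]
  have hcσ : (c • σ).trace = 1 := by rw [trace_smul, htr, smul_eq_mul, inv_mul_cancel₀ h0]
  have := hU (c • ρ) (c • σ) (hρ.smul hc) hcρ le_top (hσ.smul hc) hcσ le_top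
    (by simpa only [← ptraceZ3LinearMap_apply, map_smul] using congrArg (c • ·) h)
  simp only [mul_smul_comm, smul_mul_assoc, ← ptraceYZ3LinearMap_apply, map_smul] at this
  exact smul_right_injective _ (inv_ne_zero h0) this

lemma IsCausalOn.ptraceYZ3_eq_zero (hU : IsCausalOn U ⊤)
    {M : Matrix ((ιX × ιY) × ιZ) ((ιX × ιY) × ιZ) ℂ} (hM : ptraceZ3 M = 0) :
    ptraceYZ3 (U * M * Uᴴ) = 0 :=
  ker_le_ker_of_posSemidef ptraceZ3LinearMap ptraceZ3_conjTranspose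
    (ptraceYZ3LinearMap ∘ₗ LinearMap.mulLeftRight ℂ (U, Uᴴ))
    (fun _ _ hρ hσ h => hU.ptraceYZ3_eq_of_posSemidef hρ hσ h) hM

end Causal

lemma eq_kronecker_one_of_trace_mul_eq_zero {ιX ιY ιZ : Type*} [Fintype ιX] [Fintype ιY]
    [Fintype ιZ] [DecidableEq ιX] [DecidableEq ιY] [DecidableEq ιZ] (z₀ : ιZ)
    {G : Matrix ((ιX × ιY) × ιZ) ((ιX × ιY) × ιZ) ℂ}
    (hG : ∀ M, ptraceZ3 M = 0 → (G * M).trace = 0) :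
    G = (of fun w w' => G (w, z₀) (w', z₀)) ⊗ₖ (1 : Matrix ιZ ιZ ℂ) := by
  ext ⟨w, z⟩ ⟨w', z'⟩
  by_cases hz : z = z'
  · subst hz
    have := hG (single (w', z) (w, z) 1 - single (w', z₀) (w, z₀) 1) (by
      rw [← ptraceZ3LinearMap_apply, map_sub]
      simp only [ptraceZ3LinearMap_apply, ptraceZ3_single_same, sub_self])
    simpa [mul_sub, trace_mul_single, sub_eq_zero] using this
  · simpa [trace_mul_single, hz] using hG _ (ptraceZ3_single_of_ne w' w (Ne.symm hz) 1)

/-- If `U` is a unitary on `𝒳 ⊗ 𝒴 ⊗ 𝒵` that is `𝒴 → 𝒳` causal (on the whole space), then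
for every unitary `X` on `𝒳` there is a unitary `W` on `𝒳 ⊗ 𝒴` such that
`U*(X ⊗ 1_{𝒴⊗𝒵})U = W ⊗ 1_𝒵`. -/
theorem statement5 {ιX ιY ιZ : Type*} [Fintype ιX] [Fintype ιY] [Fintype ιZ]
    [DecidableEq ιX] [DecidableEq ιY] [DecidableEq ιZ]
    (U : Matrix ((ιX × ιY) × ιZ) ((ιX × ιY) × ιZ) ℂ)
    (hU : U ∈ Matrix.unitaryGroup ((ιX × ιY) × ιZ) ℂ)
    (hUcausal : IsCausalOn U (⊤ : Submodule ℂ (((ιX × ιY) × ιZ) → ℂ)))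
    (X : Matrix ιX ιX ℂ)
    (hX : X ∈ Matrix.unitaryGroup ιX ℂ) :
    ∃ W ∈ Matrix.unitaryGroup (ιX × ιY) ℂ,
      Uᴴ * ((X ⊗ₖ (1 : Matrix ιY ιY ℂ)) ⊗ₖ (1 : Matrix ιZ ιZ ℂ)) * U =
        W ⊗ₖ (1 : Matrix ιZ ιZ ℂ) := by
  rcases isEmpty_or_nonempty ιZ with _ | _
  · exact ⟨1, one_mem _, ext fun p => isEmptyElim p.2⟩
  set K := (X ⊗ₖ (1 : Matrix ιY ιY ℂ)) ⊗ₖ (1 : Matrix ιZ ιZ ℂ)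
  have hK : K ∈ unitaryGroup _ ℂ :=
    kronecker_mem_unitary (kronecker_mem_unitary hX (one_mem _)) (one_mem _)
  have hG : ∀ M, ptraceZ3 M = 0 → (Uᴴ * K * U * M).trace = 0 := fun M hM =>
    calc (Uᴴ * K * U * M).trace = (K * (U * M * Uᴴ)).trace := by
          rw [Matrix.mul_assoc, Matrix.mul_assoc, trace_mul_comm]
          simp only [Matrix.mul_assoc]
      _ = (X * ptraceYZ3 (U * M * Uᴴ)).trace := trace_kronecker_one_kronecker_one_mul X _
      _ = 0 := by rw [hUcausal.ptraceYZ3_eq_zero hM, Matrix.mul_zero, trace_zero]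
  have hGU : Uᴴ * K * U ∈ unitaryGroup _ ℂ := mul_mem (mul_mem (Unitary.star_mem hU) hK) hU
  have hfac := eq_kronecker_one_of_trace_mul_eq_zero (Classical.arbitrary ιZ) hG
  exact ⟨_, mem_unitary_of_kronecker_one_mem_unitary (hfac ▸ hGU), hfac⟩
end
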